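/- arXiv:1408.0948 — 2 statements merged into one kernel-verified Lean document; each statement's English description precedes it below -/
import Mathlib

section
/- For every n ≥ 1, the Boolean quadratic polytope conv(BQP_n) is affinely equivalent to an exposed face of the quadratic assignment polytope conv(QAP_m) with m = 2n: there is an exposed face F of conv(QAP_{2n}) and an injective affine map φ : ℝ^{Δ_n} → ℝ^{d} (d the number of coordinates of QAP_{2n}) with φ(conv(BQP_n)) = F. -/
/-- Index set `Δ_n = {(i,j) : 1 ≤ i ≤ j ≤ n}` for Boolean quadratic polytopes. -/
def Idx (n : ℕ) : Type := {p : Fin n × Fin n // p.1 ≤ p.2}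

/-- The vertex set of the Boolean quadratic polytope. -/
def BQP (n : ℕ) : Set (Idx n → ℝ) :=
  {x | (∀ p, x p = 0 ∨ x p = 1) ∧
       ∀ (i j : Fin n) (h : i < j),
         x ⟨(i, j), le_of_lt h⟩ = x ⟨(i, i), le_refl i⟩ * x ⟨(j, j), le_refl j⟩}

/-- Index set of lexicographically ordered pairs `(i,j) ≺ (k,l)` of entries of an
`m × m` matrix, for the quadratic coordinates `z_{ijkl}`. -/
def QAIdx (m : ℕ) : Type :=
  {r : (Fin m × Fin m) × (Fin m × Fin m) //
    r.1.1 < r.2.1 ∨ (r.1.1 = r.2.1 ∧ r.1.2 < r.2.2)}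

/-- The vertex set of the quadratic assignment polytope: vectors `(y, z)` where `y`
is a permutation matrix and `z_{ijkl} = y_{ij} · y_{kl}` for all `(i,j) ≺ (k,l)`. -/
def QAP (m : ℕ) : Set ((Fin m × Fin m → ℝ) × (QAIdx m → ℝ)) :=
  {w | (∀ q, w.1 q = 0 ∨ w.1 q = 1) ∧
       (∀ i, ∑ j, w.1 (i, j) = 1) ∧
       (∀ j, ∑ i, w.1 (i, j) = 1) ∧
       ∀ r : QAIdx m, w.2 r = w.1 r.val.1 * w.1 r.val.2}

/-!
Split the `2n` rows and columns into `n` blocks of two. A vertex `x` of `BQP n` is the same as a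
`0/1` vector `t = (x_ii)`, and it is sent to the permutation matrix that swaps the two members of
block `i` exactly when `t i = 0`, together with its pairwise products. On `BQP n` every such
product equals an affine function of `x`, because `x_ii x_jj = x_ij`; this makes the vertex map
the restriction of an injective affine map, which can read off every `x_ij` from a single
product coordinate. The permutation matrices that vanish off the diagonal blocks are exactly
those of this form, and they are the maximizers of minus the off-block mass, a linear functional.
-/

open Finset

section ConvexHull

variable {𝕜 E : Type*} [Field 𝕜] [LinearOrder 𝕜] [IsStrictOrderedRing 𝕜] [AddCommGroup E]
  [Module 𝕜 E] {S : Set E} {c : 𝕜}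

theorem mem_convexHull_sep_of_eq {f : E →ₗ[𝕜] 𝕜} {x : E} (hS : ∀ s ∈ S, f s ≤ c)
    (hx : x ∈ convexHull 𝕜 S) (hfx : f x = c) : x ∈ convexHull 𝕜 {s ∈ S | f s = c} := by
  classical
  rw [_root_.convexHull_eq] at hx
  obtain ⟨ι, t, w, z, hw₀, hw₁, hz, rfl⟩ := hx
  have hwf : ∀ i ∈ t, w i * f (z i) = w i * c := by
    refine (sum_eq_sum_iff_of_le fun i hi =>
      mul_le_mul_of_nonneg_left (hS _ (hz i hi)) (hw₀ i hi)).1 ?_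
    rw [← sum_mul, hw₁, one_mul, ← hfx, centerMass_eq_of_sum_1 _ _ hw₁, map_sum]
    simp only [map_smul, smul_eq_mul]
  rw [← centerMass_filter_ne_zero]
  refine centerMass_mem_convexHull _ (fun i hi => hw₀ i (mem_filter.1 hi).1)
    (by rw [sum_filter_ne_zero, hw₁]; exact one_pos) fun i hi => ?_
  obtain ⟨hit, hwi⟩ := mem_filter.1 hi
  exact ⟨hz i hit, mul_left_cancel₀ hwi (hwf i hit)⟩

variable [TopologicalSpace 𝕜] [TopologicalSpace E]

theorem isExposed_convexHull_sep {l : StrongDual 𝕜 E} (hS : ∀ s ∈ S, l s ≤ c) :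
    IsExposed 𝕜 (convexHull 𝕜 S) (convexHull 𝕜 {s ∈ S | l s = c}) := by
  intro hne
  obtain ⟨s₀, hs₀, hls₀⟩ := convexHull_nonempty_iff.1 hne
  have hle : ∀ x ∈ convexHull 𝕜 S, l x ≤ c := fun _ hx =>
    convexHull_min hS (convex_halfSpace_le l.toLinearMap.isLinear c) hx
  refine ⟨l, Set.ext fun x => ⟨fun hx => ?_, fun ⟨hxS, hmax⟩ => ?_⟩⟩
  · have hlx : l x = c :=
      convexHull_min (fun s hs => hs.2) (convex_hyperplane l.toLinearMap.isLinear c) hx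
    exact ⟨convexHull_mono (Set.sep_subset _ _) hx, fun y hy => hlx ▸ hle y hy⟩
  · exact mem_convexHull_sep_of_eq (f := l.toLinearMap) hS hxS
      ((hle x hxS).antisymm (hls₀ ▸ hmax s₀ (subset_convexHull 𝕜 S hs₀)))

end ConvexHull

namespace Idx

variable {n : ℕ}

def diag (i : Fin n) : Idx n := ⟨(i, i), le_refl i⟩

def sort (i j : Fin n) : Idx n := ⟨(min i j, max i j), min_le_max⟩

theorem sort_of_le {i j : Fin n} (h : i ≤ j) : sort i j = ⟨(i, j), h⟩ :=
  Subtype.ext (by simp [sort, h])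

theorem sort_self (i : Fin n) : sort i i = diag i := sort_of_le le_rfl

theorem sort_comm (i j : Fin n) : sort i j = sort j i :=
  Subtype.ext (by simp [sort, min_comm, max_comm])

end Idx

abbrev QAPSpace (m : ℕ) : Type := (Fin m × Fin m → ℝ) × (QAIdx m → ℝ)

namespace QAP

section Lift

variable {m : ℕ}

def lift (y : Fin m × Fin m → ℝ) : QAPSpace m := (y, fun r => y r.1.1 * y r.1.2)

theorem eq_lift {w : QAPSpace m} (hw : w ∈ QAP m) : w = lift w.1 :=
  Prod.ext rfl (funext hw.2.2.2)

theorem lift_mem {y : Fin m × Fin m → ℝ} (h01 : ∀ q, y q = 0 ∨ y q = 1)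
    (hrow : ∀ i, ∑ j, y (i, j) = 1) (hcol : ∀ j, ∑ i, y (i, j) = 1) : lift y ∈ QAP m :=
  ⟨h01, hrow, hcol, fun _ => rfl⟩

theorem nonneg {w : QAPSpace m} (hw : w ∈ QAP m) (q : Fin m × Fin m) : 0 ≤ w.1 q := by
  rcases hw.1 q with h | h <;> simp [h]

end Lift

variable {n : ℕ}

/-- Copy `c` of block `i`, that is, the index `c * n + i`. -/
def cell (c : Fin 2) (i : Fin n) : Fin (2 * n) := finProdFinEquiv (c, i)

@[simp] theorem modNat_cell (c : Fin 2) (i : Fin n) : (cell c i).modNat = i :=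
  congrArg Prod.snd (finProdFinEquiv.symm_apply_apply (c, i))

@[simp] theorem divNat_cell (c : Fin 2) (i : Fin n) : (cell c i).divNat = c :=
  congrArg Prod.fst (finProdFinEquiv.symm_apply_apply (c, i))

theorem cell_surjective (a : Fin (2 * n)) : ∃ c i, cell c i = a :=
  ⟨a.divNat, a.modNat, finProdFinEquiv.apply_symm_apply a⟩

theorem cell_zero_lt_cell_one (i j : Fin n) : cell 0 i < cell 1 j := by
  simp only [cell, finProdFinEquiv, Equiv.coe_fn_mk, Fin.lt_def, Fin.coe_ofNat_eq_mod,
    Nat.zero_mod, Nat.mod_succ, mul_zero, mul_one, add_zero]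
  omega

theorem sum_eq_of_block {g : Fin (2 * n) → ℝ} (i : Fin n)
    (h : ∀ c j, j ≠ i → g (cell c j) = 0) : ∑ a, g a = g (cell 0 i) + g (cell 1 i) := by
  rw [← finProdFinEquiv.sum_comp, Fintype.sum_prod_type, Fin.sum_univ_two]
  exact congrArg₂ (· + ·) (Fintype.sum_eq_single i fun j hj => h 0 j hj)
    (Fintype.sum_eq_single i fun j hj => h 1 j hj)

/-- For a `0/1` vector `t`, the permutation matrix of the involution that swaps the two copies
of block `i` exactly when `t i = 0`. -/
def blockSwapMatrix (n : ℕ) : (Fin n → ℝ) →ᵃ[ℝ] (Fin (2 * n) × Fin (2 * n) → ℝ) :=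
  AffineMap.pi fun q =>
    if q.1.modNat = q.2.modNat then
      if q.1.divNat = q.2.divNat then (LinearMap.proj q.1.modNat).toAffineMap
      else AffineMap.const ℝ _ 1 - (LinearMap.proj q.1.modNat).toAffineMap
    else 0

@[simp] theorem blockSwapMatrix_cell (t : Fin n → ℝ) (c d : Fin 2) (i j : Fin n) :
    blockSwapMatrix n t (cell c i, cell d j) =
      if i = j then (if c = d then t i else 1 - t i) else 0 := by
  simp only [blockSwapMatrix, AffineMap.pi_apply, modNat_cell, divNat_cell]
  split_ifs <;> simp

theorem blockSwapMatrix_of_modNat_ne (t : Fin n → ℝ) {a b : Fin (2 * n)}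
    (hab : a.modNat ≠ b.modNat) : blockSwapMatrix n t (a, b) = 0 := by
  simp [blockSwapMatrix, hab]

theorem sum_blockSwapMatrix_row (t : Fin n → ℝ) (a : Fin (2 * n)) :
    ∑ b, blockSwapMatrix n t (a, b) = 1 := by
  obtain ⟨c, i, rfl⟩ := cell_surjective a
  rw [sum_eq_of_block i fun d j hj => by simp [Ne.symm hj]]
  fin_cases c <;> simp

theorem sum_blockSwapMatrix_col (t : Fin n → ℝ) (b : Fin (2 * n)) :
    ∑ a, blockSwapMatrix n t (a, b) = 1 := by
  obtain ⟨d, j, rfl⟩ := cell_surjective b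
  rw [sum_eq_of_block j fun c i hi => by simp [hi]]
  fin_cases d <;> simp

theorem blockSwapMatrix_eq_zero_or_one {t : Fin n → ℝ} (ht : ∀ i, t i = 0 ∨ t i = 1)
    (q : Fin (2 * n) × Fin (2 * n)) :
    blockSwapMatrix n t q = 0 ∨ blockSwapMatrix n t q = 1 := by
  obtain ⟨a, b⟩ := q
  obtain ⟨c, i, rfl⟩ := cell_surjective a
  obtain ⟨d, j, rfl⟩ := cell_surjective b
  rw [blockSwapMatrix_cell]
  rcases ht i with h | h <;> split_ifs <;> simp [h]

theorem lift_blockSwapMatrix_mem {t : Fin n → ℝ} (ht : ∀ i, t i = 0 ∨ t i = 1) :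
    lift (blockSwapMatrix n t) ∈ QAP (2 * n) :=
  lift_mem (blockSwapMatrix_eq_zero_or_one ht) (sum_blockSwapMatrix_row t)
    (sum_blockSwapMatrix_col t)

theorem eq_blockSwapMatrix {w : QAPSpace (2 * n)} (hw : w ∈ QAP (2 * n))
    (hoff : ∀ a b : Fin (2 * n), a.modNat ≠ b.modNat → w.1 (a, b) = 0) :
    w.1 = blockSwapMatrix n fun i => w.1 (cell 0 i, cell 0 i) := by
  have hrow (c : Fin 2) (i : Fin n) :
      w.1 (cell c i, cell 0 i) + w.1 (cell c i, cell 1 i) = 1 := by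
    rw [← hw.2.1 (cell c i), sum_eq_of_block i fun d j hj => hoff _ _ (by simpa using hj.symm)]
  have hcol (d : Fin 2) (i : Fin n) :
      w.1 (cell 0 i, cell d i) + w.1 (cell 1 i, cell d i) = 1 := by
    rw [← hw.2.2.1 (cell d i), sum_eq_of_block i fun c j hj => hoff _ _ (by simpa using hj)]
  funext ⟨a, b⟩
  obtain ⟨c, i, rfl⟩ := cell_surjective a
  obtain ⟨d, j, rfl⟩ := cell_surjective b
  rw [blockSwapMatrix_cell]
  rcases eq_or_ne i j with rfl | hij
  · have := hrow 0 i; have := hrow 1 i; have := hcol 0 i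
    fin_cases c <;> fin_cases d <;> simp <;> linarith
  · rw [if_neg hij]
    exact hoff (cell c i) (cell d j) (by simpa using hij)

def offBlockMass (n : ℕ) : StrongDual ℝ (QAPSpace (2 * n)) :=
  ∑ q ∈ univ.filter (fun q : Fin (2 * n) × Fin (2 * n) => q.1.modNat ≠ q.2.modNat),
    (ContinuousLinearMap.proj q).comp (ContinuousLinearMap.fst ℝ _ _)

theorem offBlockMass_apply (w : QAPSpace (2 * n)) :
    offBlockMass n w =
      ∑ q ∈ univ.filter (fun q : Fin (2 * n) × Fin (2 * n) => q.1.modNat ≠ q.2.modNat), w.1 q := by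
  simp [offBlockMass]

theorem offBlockMass_nonneg {w : QAPSpace (2 * n)} (hw : w ∈ QAP (2 * n)) :
    0 ≤ offBlockMass n w := by
  rw [offBlockMass_apply]
  exact sum_nonneg fun q _ => nonneg hw q

theorem offBlockMass_eq_zero_iff {w : QAPSpace (2 * n)} (hw : w ∈ QAP (2 * n)) :
    offBlockMass n w = 0 ↔ ∀ a b : Fin (2 * n), a.modNat ≠ b.modNat → w.1 (a, b) = 0 := by
  rw [offBlockMass_apply, sum_eq_zero_iff_of_nonneg fun q _ => nonneg hw q]
  simp

end QAP

namespace BQP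

open QAP

variable {n : ℕ} {x : Idx n → ℝ}

theorem apply_sort (hx : x ∈ BQP n) (i j : Fin n) :
    x (Idx.sort i j) = x (Idx.diag i) * x (Idx.diag j) := by
  rcases lt_trichotomy i j with h | rfl | h
  · rw [Idx.sort_of_le h.le]
    exact hx.2 i j h
  · rw [Idx.sort_self, (IsIdempotentElem.iff_eq_zero_or_one.2 (hx.1 _)).eq]
  · rw [Idx.sort_comm, Idx.sort_of_le h.le, mul_comm]
    exact hx.2 j i h

def ofDiag (t : Fin n → ℝ) : Idx n → ℝ := fun p => t p.1.1 * t p.1.2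

theorem ofDiag_mem {t : Fin n → ℝ} (ht : ∀ i, t i = 0 ∨ t i = 1) : ofDiag t ∈ BQP n := by
  have hidem (i : Fin n) : t i * t i = t i := (IsIdempotentElem.iff_eq_zero_or_one.2 (ht i)).eq
  refine ⟨fun p => ?_, fun i j _ => ?_⟩
  · rcases ht p.1.1 with h | h <;> simp [ofDiag, h, ht]
  · simp only [ofDiag, hidem]

def diagMap (n : ℕ) : (Idx n → ℝ) →ₗ[ℝ] (Fin n → ℝ) := LinearMap.funLeft ℝ ℝ Idx.diag

theorem diagMap_ofDiag {t : Fin n → ℝ} (ht : ∀ i, t i = 0 ∨ t i = 1) :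
    diagMap n (ofDiag t) = t :=
  funext fun i => (IsIdempotentElem.iff_eq_zero_or_one.2 (ht i)).eq

/-- The product of `x_ii` or `1 - x_ii` (chosen by `α`) with `x_jj` or `1 - x_jj` (chosen by
`β`), expanded and with `x_ii x_jj` replaced by `x_ij`. -/
def productMap (i j : Fin n) : Bool → Bool → (Idx n → ℝ) →ᵃ[ℝ] ℝ
  | true, true => entry i j
  | true, false => entry i i - entry i j
  | false, true => entry j j - entry i j
  | false, false => AffineMap.const ℝ _ 1 - entry i i - entry j j + entry i j
where entry (i j : Fin n) : (Idx n → ℝ) →ᵃ[ℝ] ℝ := (LinearMap.proj (Idx.sort i j)).toAffineMap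

theorem productMap_apply_of_mem (hx : x ∈ BQP n) (i j : Fin n) (α β : Bool) :
    productMap i j α β x =
      (if α then diagMap n x i else 1 - diagMap n x i) *
        (if β then diagMap n x j else 1 - diagMap n x j) := by
  cases α <;> cases β <;>
    simp [productMap, productMap.entry, diagMap, apply_sort hx i j, Idx.sort_self] <;> ring

def quadEntry (p q : Fin (2 * n) × Fin (2 * n)) : (Idx n → ℝ) →ᵃ[ℝ] ℝ :=
  if p.1.modNat = p.2.modNat ∧ q.1.modNat = q.2.modNat then
    productMap p.1.modNat q.1.modNat (p.1.divNat == p.2.divNat) (q.1.divNat == q.2.divNat)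
  else 0

theorem quadEntry_apply_of_mem (hx : x ∈ BQP n) (p q : Fin (2 * n) × Fin (2 * n)) :
    quadEntry p q x =
      blockSwapMatrix n (diagMap n x) p * blockSwapMatrix n (diagMap n x) q := by
  obtain ⟨a, b⟩ := p
  obtain ⟨a', b'⟩ := q
  obtain ⟨c, i, rfl⟩ := cell_surjective a
  obtain ⟨d, j, rfl⟩ := cell_surjective b
  obtain ⟨c', i', rfl⟩ := cell_surjective a'
  obtain ⟨d', j', rfl⟩ := cell_surjective b'
  simp only [quadEntry, modNat_cell, divNat_cell, blockSwapMatrix_cell]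
  split_ifs <;> simp_all [productMap_apply_of_mem hx]

def embedding (n : ℕ) : (Idx n → ℝ) →ᵃ[ℝ] QAPSpace (2 * n) :=
  ((blockSwapMatrix n).comp (diagMap n).toAffineMap).prod
    (AffineMap.pi fun r => quadEntry r.1.1 r.1.2)

theorem embedding_eq_lift (hx : x ∈ BQP n) :
    embedding n x = lift (blockSwapMatrix n (diagMap n x)) :=
  Prod.ext rfl (funext fun _ => quadEntry_apply_of_mem hx _ _)

theorem embedding_apply_corner (x : Idx n → ℝ) {i j : Fin n} (h : i ≤ j) :
    (embedding n x).2 ⟨((cell 0 i, cell 0 i), (cell 1 j, cell 1 j)),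
      Or.inl (cell_zero_lt_cell_one i j)⟩ = x ⟨(i, j), h⟩ := by
  change quadEntry (cell 0 i, cell 0 i) (cell 1 j, cell 1 j) x = _
  simp only [quadEntry, modNat_cell, divNat_cell, and_self, ↓reduceIte, BEq.rfl, productMap,
    productMap.entry, Idx.sort_of_le h, LinearMap.coe_toAffineMap]
  rfl

theorem embedding_injective : Function.Injective (embedding n) := fun x x' hxx' =>
  funext fun ⟨_, h⟩ => by rw [← embedding_apply_corner x h, hxx', embedding_apply_corner]

theorem image_embedding :
    embedding n '' BQP n = {w ∈ QAP (2 * n) | offBlockMass n w = 0} := by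
  ext w
  constructor
  · rintro ⟨x, hx, rfl⟩
    have hmem := lift_blockSwapMatrix_mem (t := diagMap n x) fun i => hx.1 _
    rw [embedding_eq_lift hx]
    exact ⟨hmem, (offBlockMass_eq_zero_iff hmem).2 fun _ _ => blockSwapMatrix_of_modNat_ne _⟩
  · rintro ⟨hw, hoff⟩
    set t : Fin n → ℝ := fun i => w.1 (cell 0 i, cell 0 i)
    have ht (i : Fin n) : t i = 0 ∨ t i = 1 := hw.1 _
    refine ⟨ofDiag t, ofDiag_mem ht, ?_⟩
    rw [embedding_eq_lift (ofDiag_mem ht), diagMap_ofDiag ht,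
      ← eq_blockSwapMatrix hw ((offBlockMass_eq_zero_iff hw).1 hoff), ← eq_lift hw]

end BQP

theorem stmt15_general (n : ℕ) :
    ∃ F : Set ((Fin (2 * n) × Fin (2 * n) → ℝ) × (QAIdx (2 * n) → ℝ)),
      IsExposed ℝ (convexHull ℝ (QAP (2 * n))) F ∧
      ∃ φ : (Idx n → ℝ) →ᵃ[ℝ] ((Fin (2 * n) × Fin (2 * n) → ℝ) × (QAIdx (2 * n) → ℝ)),
        Function.Injective φ ∧ φ '' (convexHull ℝ (BQP n)) = F := by
  refine ⟨_, ?_, BQP.embedding n, BQP.embedding_injective, rfl⟩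
  have hface := isExposed_convexHull_sep (S := QAP (2 * n)) (l := -QAP.offBlockMass n) (c := 0)
    fun w hw => neg_nonpos.2 (QAP.offBlockMass_nonneg hw)
  simp only [neg_apply, neg_eq_zero] at hface
  rwa [AffineMap.image_convexHull, BQP.image_embedding]

/-- For `n ≥ 1`, `conv(BQP_n)` is affinely equivalent to an exposed face of the
quadratic assignment polytope `conv(QAP_{2n})`. -/
theorem stmt15 (n : ℕ) (hn : 1 ≤ n) :
    ∃ F : Set ((Fin (2 * n) × Fin (2 * n) → ℝ) × (QAIdx (2 * n) → ℝ)),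
      IsExposed ℝ (convexHull ℝ (QAP (2 * n))) F ∧
      ∃ φ : (Idx n → ℝ) →ᵃ[ℝ] ((Fin (2 * n) × Fin (2 * n) → ℝ) × (QAIdx (2 * n) → ℝ)),
        Function.Injective φ ∧ φ '' (convexHull ℝ (BQP n)) = F :=
  stmt15_general n
end

section
/- Let n ≥ 1, m = 2n, and J = {(i,i) : i = 1,…,m} ∪ {(2i−1, 2i) : i = 1,…,n} ∪ {(2i, 2i−1) : i = 1,…,n} ⊆ Fin m × Fin m. Let DAP_m = {y ∈ ℝ^{m×m} : every y_{ij} ∈ {0,1}, Σ_j y_{ij} = 1 for all i, Σ_i y_{ij} = 1 for all j} be the set of m×m permutation matrices. Then the set F = conv(DAP_m) ∩ {y : y_{ij} = 0 for all (i,j) ∉ J} is an exposed face of the Birkhoff polytope conv(DAP_m), and F is affinely equivalent to the n-dimensional cube [0,1]^n. -/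
/-- The vertex set of the Birkhoff polytope: `m × m` permutation matrices, i.e.
0/1 matrices all of whose row and column sums equal 1. -/
def DAP (m : ℕ) : Set (Fin m × Fin m → ℝ) :=
  {y | (∀ q, y q = 0 ∨ y q = 1) ∧
       (∀ i, ∑ j, y (i, j) = 1) ∧
       (∀ j, ∑ i, y (i, j) = 1)}

/-- The index set `J = {(i,i)} ∪ {(2i−1,2i)} ∪ {(2i,2i−1)}`
(0-indexed: the diagonal together with `(2i, 2i+1)` and `(2i+1, 2i)`). -/
def Jdap (n : ℕ) : Set (Fin (2 * n) × Fin (2 * n)) :=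
  {q | q.1 = q.2 ∨
       (∃ i : ℕ, i < n ∧ (q.1 : ℕ) = 2 * i ∧ (q.2 : ℕ) = 2 * i + 1) ∨
       (∃ i : ℕ, i < n ∧ (q.1 : ℕ) = 2 * i + 1 ∧ (q.2 : ℕ) = 2 * i)}

/-!
All points of the Birkhoff polytope are nonnegative, so the functional `y ↦ -∑_{q ∉ J} y q` is
nonpositive on it and vanishes exactly on `F`; this exposes `F`. A doubly stochastic matrix
supported on `J` is block diagonal with `2 × 2` blocks `[[c, 1 - c], [1 - c, c]]`, `0 ≤ c ≤ 1`, so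
`F` is the image of the cube under the injective affine map `c ↦ (blocks with parameters c k)`.
Conversely the vertices of the cube go to permutation matrices, so by convexity the image of the
cube lies in `F`.
-/

theorem isExposed_inter_setOf_forall_notMem_eq_zero {ι : Type*} [Fintype ι] {A : Set (ι → ℝ)}
    (hA : ∀ y ∈ A, 0 ≤ y) (S : Set ι) :
    IsExposed ℝ A (A ∩ {y | ∀ q ∉ S, y q = 0}) := by
  classical
  rintro ⟨x₀, hx₀A, hx₀⟩
  let l : StrongDual ℝ (ι → ℝ) :=
    -∑ q ∈ Finset.univ.filter (· ∉ S), ContinuousLinearMap.proj q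
  have hl_nonpos : ∀ y ∈ A, l y ≤ 0 := fun y hy => by
    simpa [l] using Finset.sum_nonneg fun q _ => hA y hy q
  have hl_eq_zero : ∀ y ∈ A, l y = 0 ↔ ∀ q ∉ S, y q = 0 := fun y hy => by
    simp [l, Finset.sum_eq_zero_iff_of_nonneg fun q _ => hA y hy q]
  refine ⟨l, Set.Subset.antisymm (fun x ⟨hxA, hx⟩ => ⟨hxA, fun y hy => ?_⟩)
    fun x ⟨hxA, hx⟩ => ⟨hxA, (hl_eq_zero x hxA).1 ?_⟩⟩
  · rw [(hl_eq_zero x hxA).2 hx]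
    exact hl_nonpos y hy
  · exact le_antisymm (hl_nonpos x hxA) ((hl_eq_zero x₀ hx₀A).2 hx₀ ▸ hx x₀ hx₀A)

theorem convexHull_pi_zero_one (ι : Type*) [Finite ι] :
    convexHull ℝ (Set.univ.pi fun _ : ι => ({0, 1} : Set ℝ)) = {c | ∀ i, 0 ≤ c i ∧ c i ≤ 1} := by
  rw [convexHull_pi]
  ext c
  simp only [Set.mem_pi, Set.mem_univ, forall_const, convexHull_pair,
    segment_eq_Icc zero_le_one, Set.mem_Icc, Set.mem_ofPred_eq]

theorem convexHull_DAP_subset (m : ℕ) :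
    convexHull ℝ (DAP m) ⊆ {y | Matrix.of (Function.curry y) ∈ doublyStochastic ℝ (Fin m)} :=
  convexHull_min
    (fun _ ⟨h01, hrow, hcol⟩ => mem_doublyStochastic_iff_sum.2
      ⟨fun i j => by rcases h01 (i, j) with h | h <;> simp [h], hrow, hcol⟩)
    (convex_doublyStochastic.linear_preimage
      ((LinearEquiv.curry ℝ ℝ (Fin m) (Fin m)).trans (Matrix.ofLinearEquiv ℝ)).toLinearMap)

namespace Jdap

variable {n : ℕ}

def block (a : Fin (2 * n)) : Fin n := ⟨a / 2, by omega⟩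

/-- The other index of the block of `a`, i.e. `a xor 1`. -/
def partner (a : Fin (2 * n)) : Fin (2 * n) := ⟨2 * (a / 2) + 1 - a % 2, by omega⟩

def first (k : Fin n) : Fin (2 * n) := ⟨2 * k, by omega⟩

theorem mem_iff {q : Fin (2 * n) × Fin (2 * n)} : q ∈ Jdap n ↔ block q.1 = block q.2 := by
  simp only [Jdap, Set.mem_ofPred_eq, block, Fin.ext_iff]
  constructor
  · rintro (h | ⟨i, -, h1, h2⟩ | ⟨i, -, h1, h2⟩) <;> omega
  · intro h
    obtain h' | h' | h' : (q.1 : ℕ) = q.2 ∨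
        (q.1 : ℕ) = 2 * (q.1 / 2) ∧ (q.2 : ℕ) = 2 * (q.1 / 2) + 1 ∨
        (q.1 : ℕ) = 2 * (q.1 / 2) + 1 ∧ (q.2 : ℕ) = 2 * (q.1 / 2) := by omega
    exacts [Or.inl h', Or.inr (Or.inl ⟨_, by omega, h'⟩), Or.inr (Or.inr ⟨_, by omega, h'⟩)]

theorem block_eq_block_iff {a b : Fin (2 * n)} : block b = block a ↔ b = a ∨ b = partner a := by
  simp only [block, partner, Fin.ext_iff]
  omega

theorem partner_ne (a : Fin (2 * n)) : partner a ≠ a := by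
  simp only [partner, ne_eq, Fin.ext_iff]
  omega

theorem partner_partner (a : Fin (2 * n)) : partner (partner a) = a := by
  simp only [partner, Fin.ext_iff]
  omega

theorem block_partner (a : Fin (2 * n)) : block (partner a) = block a :=
  block_eq_block_iff.2 (Or.inr rfl)

theorem block_first (k : Fin n) : block (first k) = k := by
  simp only [block, first, Fin.ext_iff]
  omega

section SupportedOnJdap

variable {y : Fin (2 * n) × Fin (2 * n) → ℝ} (hy : ∀ q ∉ Jdap n, y q = 0)
include hy

theorem apply_eq_zero_of_block_ne {a b : Fin (2 * n)} (h : block a ≠ block b) : y (a, b) = 0 :=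
  hy _ fun hq => h (mem_iff.1 hq)

theorem sum_row_eq (a : Fin (2 * n)) : ∑ b, y (a, b) = y (a, a) + y (a, partner a) :=
  Fintype.sum_eq_add _ _ (partner_ne a).symm fun _ ⟨h₁, h₂⟩ =>
    apply_eq_zero_of_block_ne hy fun h => (block_eq_block_iff.1 h.symm).elim h₁ h₂

theorem sum_col_eq (b : Fin (2 * n)) : ∑ a, y (a, b) = y (b, b) + y (partner b, b) :=
  Fintype.sum_eq_add _ _ (partner_ne b).symm fun _ ⟨h₁, h₂⟩ =>
    apply_eq_zero_of_block_ne hy fun h => (block_eq_block_iff.1 h).elim h₁ h₂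

variable (hrow : ∀ i, ∑ j, y (i, j) = 1)
include hrow

theorem apply_partner_eq (a : Fin (2 * n)) : y (a, partner a) = 1 - y (a, a) := by
  linarith [sum_row_eq hy a, hrow a]

variable (hcol : ∀ j, ∑ i, y (i, j) = 1)
include hcol

theorem apply_partner_partner (a : Fin (2 * n)) : y (partner a, partner a) = y (a, a) := by
  have hrow' := sum_row_eq hy (partner a)
  rw [partner_partner] at hrow'
  linarith [hrow a, hrow (partner a), hcol a, sum_row_eq hy a, sum_col_eq hy a]

theorem diag_eq_of_block_eq {a b : Fin (2 * n)} (h : block b = block a) : y (b, b) = y (a, a) := by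
  obtain rfl | rfl := block_eq_block_iff.1 h
  exacts [rfl, apply_partner_partner hy hrow hcol a]

end SupportedOnJdap

noncomputable def cubeMap (n : ℕ) : (Fin n → ℝ) →ᵃ[ℝ] (Fin (2 * n) × Fin (2 * n) → ℝ) :=
  AffineMap.pi fun q =>
    if q.2 = q.1 then (LinearMap.proj (block q.1)).toAffineMap
    else if q.2 = partner q.1 then AffineMap.const ℝ _ 1 - (LinearMap.proj (block q.1)).toAffineMap
    else 0

theorem cubeMap_apply (c : Fin n → ℝ) (a b : Fin (2 * n)) :
    cubeMap n c (a, b) =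
      if b = a then c (block a) else if b = partner a then 1 - c (block a) else 0 := by
  simp only [cubeMap, AffineMap.pi_apply]
  split_ifs <;> simp

theorem cubeMap_apply_of_notMem (c : Fin n → ℝ) : ∀ q ∉ Jdap n, cubeMap n c q = 0 := by
  rintro ⟨a, b⟩ hq
  have hab : ¬(b = a ∨ b = partner a) := by
    rw [← block_eq_block_iff]
    exact fun h => hq (mem_iff.2 h.symm)
  rw [cubeMap_apply, if_neg fun h => hab (Or.inl h), if_neg fun h => hab (Or.inr h)]

theorem cubeMap_injective : Function.Injective (cubeMap n) := by
  intro c c' h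
  funext k
  simpa [cubeMap_apply, block_first] using congrFun h (first k, first k)

theorem cubeMap_mem_DAP {c : Fin n → ℝ} (hc : ∀ k, c k = 0 ∨ c k = 1) :
    cubeMap n c ∈ DAP (2 * n) := by
  refine ⟨fun ⟨a, b⟩ => ?_, fun a => ?_, fun b => ?_⟩
  · rw [cubeMap_apply]
    rcases hc (block a) with h | h <;> split_ifs <;> simp [h]
  · rw [sum_row_eq (cubeMap_apply_of_notMem c)]
    simp [cubeMap_apply, partner_ne]
  · rw [sum_col_eq (cubeMap_apply_of_notMem c)]
    simp [cubeMap_apply, partner_partner, block_partner, (partner_ne b).symm]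

theorem eq_cubeMap {y : Fin (2 * n) × Fin (2 * n) → ℝ} (hy : ∀ q ∉ Jdap n, y q = 0)
    (hrow : ∀ i, ∑ j, y (i, j) = 1) (hcol : ∀ j, ∑ i, y (i, j) = 1) :
    y = cubeMap n fun k => y (first k, first k) := by
  funext ⟨a, b⟩
  rw [cubeMap_apply]
  have hdiag := diag_eq_of_block_eq hy hrow hcol (block_first (block a))
  split_ifs with h₁ h₂
  · rw [h₁, hdiag]
  · rw [h₂, apply_partner_eq hy hrow, hdiag]
  · exact apply_eq_zero_of_block_ne hy fun h => (block_eq_block_iff.1 h.symm).elim h₁ h₂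

theorem mem_image_cubeMap {y : Fin (2 * n) × Fin (2 * n) → ℝ} (hy : ∀ q ∉ Jdap n, y q = 0)
    (hrow : ∀ i, ∑ j, y (i, j) = 1) (hcol : ∀ j, ∑ i, y (i, j) = 1) (hnonneg : ∀ q, 0 ≤ y q) :
    y ∈ cubeMap n '' {c | ∀ i, 0 ≤ c i ∧ c i ≤ 1} := by
  refine ⟨_, fun k => ⟨hnonneg _, ?_⟩, (eq_cubeMap hy hrow hcol).symm⟩
  linarith [apply_partner_eq hy hrow (first k), hnonneg (first k, partner (first k))]

end Jdap

theorem stmt16_general (n : ℕ) :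
    IsExposed ℝ (convexHull ℝ (DAP (2 * n)))
      (convexHull ℝ (DAP (2 * n)) ∩ {y | ∀ q ∉ Jdap n, y q = 0}) ∧
    ∃ φ : (Fin n → ℝ) →ᵃ[ℝ] (Fin (2 * n) × Fin (2 * n) → ℝ),
      Function.Injective φ ∧
      φ '' {c | ∀ i, 0 ≤ c i ∧ c i ≤ 1} =
        convexHull ℝ (DAP (2 * n)) ∩ {y | ∀ q ∉ Jdap n, y q = 0} := by
  have hds {y} (hy : y ∈ convexHull ℝ (DAP (2 * n))) :=
    mem_doublyStochastic_iff_sum.1 (convexHull_DAP_subset (2 * n) hy)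
  refine ⟨isExposed_inter_setOf_forall_notMem_eq_zero (fun y hy q => (hds hy).1 q.1 q.2) _,
    Jdap.cubeMap n, Jdap.cubeMap_injective, subset_antisymm ?_ ?_⟩
  · rw [← convexHull_pi_zero_one, AffineMap.image_convexHull]
    refine convexHull_min ?_ <| (convex_convexHull ℝ _).inter
      fun y hy z hz a b _ _ _ q hq => by simp [hy q hq, hz q hq]
    rintro _ ⟨c, hc, rfl⟩
    exact ⟨subset_convexHull ℝ _ (Jdap.cubeMap_mem_DAP fun k => hc k trivial),
      Jdap.cubeMap_apply_of_notMem c⟩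
  · rintro y ⟨hy, hJ⟩
    exact Jdap.mem_image_cubeMap hJ (hds hy).2.1 (hds hy).2.2 fun q => (hds hy).1 q.1 q.2

/-- `F = conv(DAP_{2n}) ∩ {y : y_q = 0 ∀ q ∉ J}` is an exposed face of the Birkhoff
polytope `conv(DAP_{2n})`, affinely equivalent to the cube `[0,1]^n`. -/
theorem stmt16 (n : ℕ) (hn : 1 ≤ n) :
    IsExposed ℝ (convexHull ℝ (DAP (2 * n)))
      (convexHull ℝ (DAP (2 * n)) ∩ {y | ∀ q ∉ Jdap n, y q = 0}) ∧
    ∃ φ : (Fin n → ℝ) →ᵃ[ℝ] (Fin (2 * n) × Fin (2 * n) → ℝ),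
      Function.Injective φ ∧
      φ '' {c | ∀ i, 0 ≤ c i ∧ c i ≤ 1} =
        convexHull ℝ (DAP (2 * n)) ∩ {y | ∀ q ∉ Jdap n, y q = 0} :=
  stmt16_general n
end
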